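/- arXiv:2206.15001 — 2 statements merged into one kernel-verified Lean document; each statement's English description precedes it below -/
import Mathlib

section
/- For every positive integer n and real x ≥ 1, the derivatives satisfy 2 ≤ P̄ₙ′(x) < P̄_{n+1}′(x). -/
/-- Divisor sum `σ(n) = ∑_{d ∣ n} d`. -/
def sigma1 (n : ℕ) : ℕ := ∑ d ∈ n.divisors, d

/-- `σ̄(n) = 2^(m+1) σ(l)` where `n = 2^m l` with `l` odd. -/
def sigmabar (n : ℕ) : ℕ :=
  2 ^ (n.factorization 2 + 1) * sigma1 (n / 2 ^ (n.factorization 2))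

/-- Polynomials `P̄ₙ` with `P̄₀ = 1` and
`P̄ₙ(x) = (x/n) ∑_{k=1}^n σ̄(k) P̄_{n-k}(x)`. -/
noncomputable def Pbar : ℕ → Polynomial ℝ
  | 0 => 1
  | (n + 1) =>
      Polynomial.C ((n + 1 : ℝ)⁻¹) * Polynomial.X *
        ∑ k ∈ Finset.range (n + 1), (sigmabar (k + 1) : ℝ) • Pbar (n - k)
decreasing_by exact Nat.lt_succ_of_le (Nat.sub_le n k)

/-!
Differentiating the recurrence gives `P̄ₙ′ = ∑_{k=1}^n (σ̄(k)/k) P̄_{n-k}` (the generating function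
of the `P̄ₙ` is `exp (x ∑ σ̄(k) qᵏ / k)`), and `σ̄(k) ≥ 2k` makes every coefficient `σ̄(k)/k ≥ 2`.
Hence `P̄′_{n+1}(x) - P̄′ₙ(x) ≥ 2` as soon as `m ↦ P̄ₘ(x)` is nondecreasing up to `n`. That
monotonicity for `x ≥ 1` is proved by integrating `P̄′_{n+1} - P̄′ₙ ≥ 0` from `x = 1`; at `x = 1` it
is the case `t = 1` of `t P̄ₙ(t) ≤ P̄ₙ₊₁(t)` on `[0, 1]`, obtained in the same way from `t = 0`.
-/

open Polynomial Finset

theorem two_mul_le_sigmabar {k : ℕ} (hk : 0 < k) : 2 * k ≤ sigmabar k := by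
  have hdvd : 2 ^ k.factorization 2 ∣ k := Nat.ordProj_dvd k 2
  have hodd_pos : 0 < k / 2 ^ k.factorization 2 :=
    Nat.div_pos (Nat.le_of_dvd hk hdvd) (by positivity)
  have hle_sigma : k / 2 ^ k.factorization 2 ≤ sigma1 (k / 2 ^ k.factorization 2) :=
    single_le_sum (fun i _ => Nat.zero_le i) (Nat.mem_divisors_self _ hodd_pos.ne')
  calc 2 * k = 2 ^ (k.factorization 2 + 1) * (k / 2 ^ k.factorization 2) := by
        rw [pow_succ, mul_comm _ 2, mul_assoc, Nat.mul_div_cancel' hdvd]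
    _ ≤ sigmabar k := Nat.mul_le_mul_left _ hle_sigma

/-- The paper's `σ̄(k)/k`, indexed from `0` like the sums in `Pbar`. -/
noncomputable def sigmabarDiv (k : ℕ) : ℝ := sigmabar (k + 1) / (k + 1)

theorem two_le_sigmabarDiv (k : ℕ) : 2 ≤ sigmabarDiv k := by
  have h : 2 * ((k : ℝ) + 1) ≤ sigmabar (k + 1) := by
    exact_mod_cast two_mul_le_sigmabar k.succ_pos
  rw [sigmabarDiv, le_div_iff₀ (by positivity)]
  exact h

theorem sigmabarDiv_mul (k : ℕ) : sigmabarDiv k * (k + 1) = sigmabar (k + 1) :=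
  div_mul_cancel₀ _ (by positivity)

theorem Pbar_zero : Pbar 0 = 1 := by rw [Pbar]

theorem natCast_mul_Pbar (n : ℕ) :
    C (n : ℝ) * Pbar n = X * ∑ k ∈ range n, C (sigmabar (k + 1) : ℝ) * Pbar (n - 1 - k) := by
  cases n with
  | zero => simp
  | succ n =>
    rw [Pbar, ← mul_assoc, ← mul_assoc, ← C_mul, Nat.cast_succ,
      mul_inv_cancel₀ (by positivity), C_1, one_mul, Nat.add_sub_cancel]
    simp only [smul_eq_C_mul]

theorem sum_mul_sum_range_sub_comm {R : Type*} [CommSemiring R] (f g h : ℕ → R) (n : ℕ) :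
    ∑ k ∈ range n, f k * ∑ j ∈ range (n - 1 - k), g j * h (n - 1 - k - 1 - j) =
      ∑ k ∈ range n, g k * ∑ j ∈ range (n - 1 - k), f j * h (n - 1 - k - 1 - j) := by
  simp only [mul_sum]
  rw [sum_comm' (t' := range n) (s' := fun j => range (n - 1 - j))
    (fun k j => by simp only [mem_range]; omega)]
  refine sum_congr rfl fun k _ => sum_congr rfl fun j _ => ?_
  rw [show n - 1 - j - 1 - k = n - 1 - k - 1 - j by omega]
  ring

theorem derivative_Pbar (n : ℕ) :
    derivative (Pbar n) = ∑ k ∈ range n, C (sigmabarDiv k) * Pbar (n - 1 - k) := by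
  induction n using Nat.strong_induction_on with
  | _ n ih =>
  rcases n.eq_zero_or_pos with rfl | hn
  · simp [Pbar_zero]
  set S : ℕ → ℝ[X] := fun m => ∑ j ∈ range m, C (sigmabar (j + 1) : ℝ) * Pbar (m - 1 - j)
  have hS_deriv : derivative (S n) =
      ∑ k ∈ range n, C (sigmabar (k + 1) : ℝ) *
        ∑ j ∈ range (n - 1 - k), C (sigmabarDiv j) * Pbar (n - 1 - k - 1 - j) := by
    rw [derivative_sum]
    refine sum_congr rfl fun k hk => ?_
    rw [derivative_C_mul, ih _ (by rw [mem_range] at hk; omega)]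
  have hterm : ∀ k ∈ range n, C (n : ℝ) * (C (sigmabarDiv k) * Pbar (n - 1 - k)) =
      C (sigmabar (k + 1) : ℝ) * Pbar (n - 1 - k) + X * (C (sigmabarDiv k) * S (n - 1 - k)) := by
    intro k hk
    have hscalar : (n : ℝ) * sigmabarDiv k = sigmabar (k + 1) + sigmabarDiv k * (n - 1 - k : ℕ) := by
      rw [mem_range] at hk
      rw [← sigmabarDiv_mul, Nat.cast_sub (by omega), Nat.cast_sub (by omega)]
      ring
    rw [← mul_assoc, ← C_mul, hscalar, C_add, C_mul, add_mul, mul_assoc, natCast_mul_Pbar]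
    ring
  apply mul_left_cancel₀ (C_ne_zero.2 (Nat.cast_ne_zero.2 hn.ne'))
  calc C (n : ℝ) * derivative (Pbar n) = derivative (C (n : ℝ) * Pbar n) :=
        (derivative_C_mul ..).symm
    _ = S n + X * derivative (S n) := by
        rw [natCast_mul_Pbar, derivative_mul, derivative_X, one_mul]
    _ = S n + X * ∑ k ∈ range n, C (sigmabarDiv k) * S (n - 1 - k) := by
        rw [hS_deriv, sum_mul_sum_range_sub_comm]
    _ = C (n : ℝ) * ∑ k ∈ range n, C (sigmabarDiv k) * Pbar (n - 1 - k) := by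
        rw [mul_sum, mul_sum, sum_congr rfl hterm, sum_add_distrib]

theorem eval_derivative_Pbar (n : ℕ) (x : ℝ) :
    (derivative (Pbar n)).eval x = ∑ k ∈ range n, sigmabarDiv k * (Pbar (n - 1 - k)).eval x := by
  simp [derivative_Pbar, eval_finsetSum]

theorem eval_derivative_Pbar_succ (n : ℕ) (x : ℝ) :
    (derivative (Pbar (n + 1))).eval x =
      sigmabarDiv n + ∑ k ∈ range n, sigmabarDiv k * (Pbar (n - k)).eval x := by
  rw [eval_derivative_Pbar, sum_range_succ, add_comm]
  simp [Pbar_zero]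

theorem eval_Pbar_nonneg {x : ℝ} (hx : 0 ≤ x) (n : ℕ) : 0 ≤ (Pbar n).eval x := by
  induction n using Nat.strong_induction_on with
  | _ n ih =>
  match n with
  | 0 => simp [Pbar_zero]
  | n + 1 =>
    rw [Pbar]
    simp only [eval_mul, eval_C, eval_X, eval_finsetSum, eval_smul, smul_eq_mul]
    exact mul_nonneg (by positivity) <| sum_nonneg fun k _ =>
      mul_nonneg (Nat.cast_nonneg _) (ih _ (by omega))

theorem Polynomial.eval_le_eval_of_derivative_nonneg {p : ℝ[X]} {a b : ℝ} (hab : a ≤ b)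
    (h : ∀ t ∈ Set.Icc a b, 0 ≤ (derivative p).eval t) : p.eval a ≤ p.eval b := by
  have hmono : MonotoneOn (fun t => p.eval t) (Set.Icc a b) :=
    monotoneOn_of_deriv_nonneg (convex_Icc a b) p.continuousOn p.differentiable.differentiableOn
      fun t ht => by
        rw [Polynomial.deriv]
        exact h t (interior_subset ht)
  exact hmono (Set.left_mem_Icc.2 hab) (Set.right_mem_Icc.2 hab) hab

theorem Finset.sum_range_sub_reflect {G : Type*} [AddCommGroup G] (f : ℕ → G) (n : ℕ) :
    ∑ k ∈ range n, (f (n - k) - f (n - 1 - k)) = f n - f 0 := by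
  rw [← sum_range_sub, ← sum_range_reflect]
  refine sum_congr rfl fun k hk => ?_
  rw [mem_range] at hk
  rw [show n - (n - 1 - k) = k + 1 by omega, show n - 1 - (n - 1 - k) = k by omega]

theorem eval_derivative_X_mul_Pbar_le {s : ℝ} (hs0 : 0 ≤ s) (hs1 : s ≤ 1) (n : ℕ)
    (hprev : ∀ m < n, s * (Pbar m).eval s ≤ (Pbar (m + 1)).eval s) :
    (derivative (X * Pbar n)).eval s ≤ (derivative (Pbar (n + 1))).eval s := by
  set g : ℕ → ℝ := fun i => (Pbar i).eval s with hg
  have hterm : ∀ k ∈ range n, 2 * (g (n - k) - g (n - 1 - k)) ≤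
      sigmabarDiv k * g (n - k) - s * (sigmabarDiv k * g (n - 1 - k)) := by
    intro k hk
    rw [mem_range] at hk
    have hstep : s * g (n - 1 - k) ≤ g (n - k) := by
      simpa only [hg, show n - 1 - k + 1 = n - k by omega] using hprev (n - 1 - k) (by omega)
    have hg_nonneg := eval_Pbar_nonneg hs0 (n - 1 - k)
    nlinarith [two_le_sigmabarDiv k]
  -- the lower bounds telescope to `2 * (P̄ₙ(s) - 1)`
  have hsum := sum_le_sum hterm
  rw [← mul_sum, sum_range_sub_reflect, sum_sub_distrib, ← mul_sum] at hsum
  rw [derivative_mul, derivative_X, one_mul, eval_add, eval_mul, eval_X,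
    eval_derivative_Pbar, eval_derivative_Pbar_succ]
  have hg0 : g 0 = 1 := by simp [hg, Pbar_zero]
  linarith [two_le_sigmabarDiv n, eval_Pbar_nonneg hs0 n]

theorem mul_eval_Pbar_le_eval_Pbar_succ {t : ℝ} (ht0 : 0 ≤ t) (ht1 : t ≤ 1) (n : ℕ) :
    t * (Pbar n).eval t ≤ (Pbar (n + 1)).eval t := by
  induction n using Nat.strong_induction_on generalizing t with
  | _ n ih =>
  have hmono := eval_le_eval_of_derivative_nonneg (p := Pbar (n + 1) - X * Pbar n) ht0
    fun s ⟨hs0, hst⟩ => by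
      rw [derivative_sub, eval_sub, sub_nonneg]
      exact eval_derivative_X_mul_Pbar_le hs0 (hst.trans ht1) n
        fun m hm => ih m hm hs0 (hst.trans ht1)
  have hat_zero : (Pbar (n + 1) - X * Pbar n).eval 0 = 0 := by simp [Pbar]
  rw [hat_zero, eval_sub, eval_mul, eval_X, sub_nonneg] at hmono
  exact hmono

theorem eval_derivative_Pbar_add_two_le {x : ℝ} (n : ℕ)
    (hmono : ∀ m < n, (Pbar m).eval x ≤ (Pbar (m + 1)).eval x) :
    (derivative (Pbar n)).eval x + 2 ≤ (derivative (Pbar (n + 1))).eval x := by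
  have hterm : ∀ k ∈ range n,
      sigmabarDiv k * (Pbar (n - 1 - k)).eval x ≤ sigmabarDiv k * (Pbar (n - k)).eval x := by
    intro k hk
    rw [mem_range] at hk
    refine mul_le_mul_of_nonneg_left ?_ (zero_le_two.trans (two_le_sigmabarDiv k))
    simpa only [show n - 1 - k + 1 = n - k by omega] using hmono (n - 1 - k) (by omega)
  rw [eval_derivative_Pbar, eval_derivative_Pbar_succ]
  linarith [sum_le_sum hterm, two_le_sigmabarDiv n]

theorem eval_Pbar_le_eval_Pbar_succ {x : ℝ} (hx : 1 ≤ x) (n : ℕ) :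
    (Pbar n).eval x ≤ (Pbar (n + 1)).eval x := by
  induction n using Nat.strong_induction_on generalizing x with
  | _ n ih =>
  have hmono := eval_le_eval_of_derivative_nonneg (p := Pbar (n + 1) - Pbar n) hx
    fun s ⟨hs1, _⟩ => by
      rw [derivative_sub, eval_sub, sub_nonneg]
      linarith [eval_derivative_Pbar_add_two_le n fun m hm => ih m hm hs1]
  have hat_one := mul_eval_Pbar_le_eval_Pbar_succ zero_le_one le_rfl n
  simp only [eval_sub, one_mul] at hmono hat_one ⊢
  linarith

theorem two_mul_le_eval_derivative_Pbar {x : ℝ} (hx : 1 ≤ x) (n : ℕ) :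
    2 * n ≤ (derivative (Pbar n)).eval x := by
  induction n with
  | zero => simp [Pbar_zero]
  | succ n ih =>
    push_cast
    linarith [eval_derivative_Pbar_add_two_le n fun m _ => eval_Pbar_le_eval_Pbar_succ hx m]

theorem Pbar_deriv_bounds (n : ℕ) (hn : 1 ≤ n) (x : ℝ) (hx : 1 ≤ x) :
    2 ≤ (Polynomial.derivative (Pbar n)).eval x ∧
      (Polynomial.derivative (Pbar n)).eval x <
        (Polynomial.derivative (Pbar (n + 1))).eval x := by
  have hlower := two_mul_le_eval_derivative_Pbar hx n
  have hstep := eval_derivative_Pbar_add_two_le n fun m _ => eval_Pbar_le_eval_Pbar_succ hx m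
  have hn' : (1 : ℝ) ≤ n := by exact_mod_cast hn
  constructor <;> linarith
end

section
/- For every positive integer a and integer k ≥ 2, p̄_{−k}(a | no 1₁'s)·p̄_{−k}(1) > p̄_{−k}(a+1 | no 1₁'s), where p̄_{−k}(n | no 1₁'s) counts k-colored overpartitions of n having no non-overlined part equal to 1 in color 1. -/
open Finset

/-- Number of overpartitions of `n`: an overpartition is encoded as a pair
(overlined parts = partition into distinct parts, non-overlined parts =
arbitrary partition). -/
def overp (n : ℕ) : ℕ :=
  ∑ ij ∈ Finset.HasAntidiagonal.antidiagonal n,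
    (Nat.Partition.distincts ij.1).card * Fintype.card (Nat.Partition ij.2)

/-- Overpartitions of `n` with no non-overlined part equal to `i`. -/
def overpNo (i n : ℕ) : ℕ :=
  ∑ ij ∈ Finset.HasAntidiagonal.antidiagonal n,
    (Nat.Partition.distincts ij.1).card *
      (Finset.univ.filter (fun p : Nat.Partition ij.2 => i ∉ p.parts)).card

/-- Number of `k`-colored overpartitions of `n`: one overpartition for each of
the `k` colors, with total size `n`. -/
def overpK (k n : ℕ) : ℕ :=
  ∑ f ∈ Finset.Nat.antidiagonalTuple k n, ∏ i : Fin k, overp (f i)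

/-- `k`-colored overpartitions of `n` with no non-overlined part equal to `1`
in color `1` (the color of index `0`). -/
def overpKNo1c1 (k n : ℕ) : ℕ :=
  ∑ f ∈ Finset.Nat.antidiagonalTuple k n,
    ∏ i : Fin k, if (i : ℕ) = 0 then overpNo 1 (f i) else overp (f i)

/-
Write `d`, `p`, `q` for the numbers of partitions into distinct parts, of all partitions and of
partitions without a part `1`; then `p̄ = d ∗ p` and `p̄(· | no 1) = d ∗ q` (convolutions).
Removing a part `1`, or lowering the least part by one, gives `d(n+1) ≤ 2 d(n)`,
`p(n+1) = q(n+1) + p(n)` and `q(n+2) ≤ q(n+1) + q(n)`; from these, both one-colored sequences at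
most double from `n` to `n+1`.

For `k` colors, count the pairs `(f, j)` of a composition `f` of `n+1` into `k` colors and a
color `j` with `f j ≠ 0`: lowering `f j` by one identifies them with `k` copies of the
compositions of `n`, so the `k`-colored count at `n+1` is at most `2k` times the count at `n`,
strictly so because some `f` uses two colors. Finally `p̄_{-k}(1) = 2k`.
-/

namespace Nat.Partition

variable {n : ℕ}

theorem exists_mem_parts (p : Partition (n + 1)) : ∃ m, m ∈ p.parts := by
  by_contra! h
  simpa [Multiset.eq_zero_of_forall_notMem h] using p.parts_sum

def minPart (p : Partition (n + 1)) : ℕ := Nat.find p.exists_mem_parts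

theorem minPart_mem (p : Partition (n + 1)) : p.minPart ∈ p.parts :=
  Nat.find_spec p.exists_mem_parts

theorem minPart_le {p : Partition (n + 1)} {m : ℕ} (hm : m ∈ p.parts) : p.minPart ≤ m :=
  Nat.find_min' _ hm

theorem two_le_minPart {p : Partition (n + 1)} (h : 1 ∉ p.parts) : 2 ≤ p.minPart := by
  have hpos := p.parts_pos p.minPart_mem
  have hne : p.minPart ≠ 1 := fun h1 => h (by simpa [h1] using p.minPart_mem)
  omega

/-- Total: a least part `1` is lowered to `0`, which `ofSums` discards. -/
def lowerMinPart (p : Partition (n + 1)) : Partition n :=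
  ofSums n ((p.minPart - 1) ::ₘ p.parts.erase p.minPart) <| by
    have h := Multiset.sum_erase p.minPart_mem
    have hpos := p.parts_pos p.minPart_mem
    rw [p.parts_sum] at h
    rw [Multiset.sum_cons]
    omega

theorem lowerMinPart_parts {p : Partition (n + 1)} (h : 1 ∉ p.parts) :
    p.lowerMinPart.parts = (p.minPart - 1) ::ₘ p.parts.erase p.minPart := by
  have h2 := two_le_minPart h
  rw [lowerMinPart, ofSums_parts, Multiset.filter_eq_self]
  intro x hx
  rcases Multiset.mem_cons.1 hx with rfl | hx
  · omega
  · exact (p.parts_pos (Multiset.mem_of_mem_erase hx)).ne'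

theorem lowerMinPart_injOn : Set.InjOn lowerMinPart {p : Partition (n + 1) | 1 ∉ p.parts} := by
  intro p hp q hq hpq
  have hparts := congrArg parts hpq
  rw [lowerMinPart_parts hp, lowerMinPart_parts hq] at hparts
  -- `m - 1` is the least part of the image, so it recovers `m`.
  have hmin : p.minPart = q.minPart := by
    have hp2 := two_le_minPart hp
    have hq2 := two_le_minPart hq
    have hpq' : p.minPart - 1 ∈ (q.minPart - 1) ::ₘ q.parts.erase q.minPart :=
      hparts ▸ Multiset.mem_cons_self _ _
    have hqp' : q.minPart - 1 ∈ (p.minPart - 1) ::ₘ p.parts.erase p.minPart :=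
      hparts ▸ Multiset.mem_cons_self _ _
    rcases Multiset.mem_cons.1 hpq' with h | h
    · omega
    rcases Multiset.mem_cons.1 hqp' with h' | h'
    · omega
    have := minPart_le (Multiset.mem_of_mem_erase h)
    have := minPart_le (Multiset.mem_of_mem_erase h')
    omega
  rw [hmin, Multiset.cons_inj_right] at hparts
  ext1
  rw [← Multiset.cons_erase p.minPart_mem, ← Multiset.cons_erase q.minPart_mem, hmin, hparts]

theorem card_filter_mem_parts_le {a : ℕ} (P Q : Multiset ℕ → Prop) [DecidablePred P]
    [DecidablePred Q] (hPQ : ∀ s, a ∈ s → P s → Q (s.erase a)) :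
    #{p : Partition (n + a) | P p.parts ∧ a ∈ p.parts} ≤ #{q : Partition n | Q q.parts} := by
  let erasePart (p : Partition (n + a)) : Partition n :=
    if ha : a ∈ p.parts then
      ⟨p.parts.erase a, fun hi => p.parts_pos (Multiset.mem_of_mem_erase hi), by
        have h := Multiset.sum_erase ha
        rw [p.parts_sum] at h
        omega⟩
    else default
  have erasePart_parts {p} (ha : a ∈ p.parts) : (erasePart p).parts = p.parts.erase a := by
    simp only [erasePart, dif_pos ha]
  refine card_le_card_of_injOn erasePart (fun p hp => ?_) (fun p hp q hq hpq => ?_)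
  · simp only [coe_filter, mem_univ, true_and, Set.mem_ofPred_eq] at hp ⊢
    rw [erasePart_parts hp.2]
    exact hPQ _ hp.2 hp.1
  · simp only [coe_filter, mem_univ, true_and, Set.mem_ofPred_eq] at hp hq
    have h := congrArg parts hpq
    rw [erasePart_parts hp.2, erasePart_parts hq.2] at h
    ext1
    rw [← Multiset.cons_erase hp.2, ← Multiset.cons_erase hq.2, h]

theorem card_filter_le_of_lowerMinPart (P Q : Multiset ℕ → Prop) [DecidablePred P]
    [DecidablePred Q] (hP : ∀ s, P s → 1 ∉ s)
    (hPQ : ∀ s m, m ∈ s → 2 ≤ m → (∀ x ∈ s, m ≤ x) → P s → Q ((m - 1) ::ₘ s.erase m)) :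
    #{p : Partition (n + 1) | P p.parts} ≤ #{q : Partition n | Q q.parts} := by
  refine card_le_card_of_injOn lowerMinPart (fun p hp => ?_) (fun p hp q hq hpq => ?_)
  · simp only [coe_filter, mem_univ, true_and, Set.mem_ofPred_eq] at hp ⊢
    have h1 := hP _ hp
    rw [lowerMinPart_parts h1]
    exact hPQ _ _ p.minPart_mem (two_le_minPart h1) (fun _ => minPart_le) hp
  · simp only [coe_filter, mem_univ, true_and, Set.mem_ofPred_eq] at hp hq
    exact lowerMinPart_injOn (hP _ hp) (hP _ hq) hpq

theorem card_succ :
    Fintype.card (Partition (n + 1)) = #{p : Partition (n + 1) | 1 ∉ p.parts} +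
      Fintype.card (Partition n) := by
  have hwith : #{p : Partition (n + 1) | 1 ∈ p.parts} = Fintype.card (Partition n) := by
    rw [← Fintype.card_subtype, Fintype.card_congr (partitionWithPartEquiv le_rfl (by omega)),
      Nat.add_sub_cancel]
  have hsplit :=
    card_filter_add_card_filter_not (s := univ) (fun p : Partition (n + 1) => 1 ∈ p.parts)
  rw [← Fintype.card] at hsplit
  omega

theorem card_distincts_succ_le :
    #(distincts (n + 1)) ≤ #{q ∈ distincts n | 1 ∉ q.parts} + #(distincts n) := by
  have hwith := card_filter_mem_parts_le (n := n) (a := 1) Multiset.Nodup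
    (fun s => s.Nodup ∧ 1 ∉ s) fun s _ hs => ⟨hs.erase 1, hs.notMem_erase⟩
  have hwithout := card_filter_le_of_lowerMinPart (n := n) (fun s => s.Nodup ∧ 1 ∉ s)
    Multiset.Nodup (fun _ hs => hs.2) fun s m _ _ hmin hs => by
      refine Multiset.nodup_cons.2 ⟨fun h => ?_, hs.1.erase m⟩
      have := hmin _ (Multiset.mem_of_mem_erase h)
      omega
  have hsplit := card_filter_add_card_filter_not (s := distincts (n + 1)) (fun p => 1 ∈ p.parts)
  simp only [distincts, filter_filter] at hsplit hwith hwithout ⊢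
  omega

theorem card_filter_one_notMem_add_two_le :
    #{p : Partition (n + 2) | 1 ∉ p.parts} ≤
      #{p : Partition (n + 1) | 1 ∉ p.parts} + #{p : Partition n | 1 ∉ p.parts} := by
  have hwith := card_filter_mem_parts_le (n := n) (a := 2) (fun s => 1 ∉ s) (fun s => 1 ∉ s)
    fun s _ hs h => hs (Multiset.mem_of_mem_erase h)
  have hwithout := card_filter_le_of_lowerMinPart (n := n + 1) (fun s => 1 ∉ s ∧ 2 ∉ s)
    (fun s => 1 ∉ s) (fun _ hs => hs.1) fun s m hm h2 hmin hs h => by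
      rcases Multiset.mem_cons.1 h with h | h
      · exact hs.2 (by rwa [show m = 2 by omega] at hm)
      · have := hmin 1 (Multiset.mem_of_mem_erase h)
        omega
  have hsplit := card_filter_add_card_filter_not
    (s := {p : Partition (n + 2) | 1 ∉ p.parts}) (fun p => 2 ∈ p.parts)
  rw [filter_filter, filter_filter] at hsplit
  exact hsplit.symm.le.trans ((add_le_add hwith hwithout).trans_eq (add_comm _ _))

theorem card_distincts_pos (n : ℕ) : 0 < #(distincts n) :=
  Finset.card_pos.2 ⟨indiscrete n, mem_filter.2 ⟨mem_univ _,
    (Multiset.nodup_singleton n).filter _⟩⟩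

theorem card_distincts_zero : #(distincts 0) = 1 :=
  le_antisymm ((card_le_univ _).trans_eq Fintype.card_unique) (card_distincts_pos 0)

theorem card_distincts_one : #(distincts 1) = 1 :=
  le_antisymm ((card_le_univ _).trans_eq Fintype.card_unique) (card_distincts_pos 1)

theorem card_filter_one_notMem_zero : #{p : Partition 0 | 1 ∉ p.parts} = 1 := by
  simp

-- The slack for `n ≤ 1` absorbs `q(m+2) ≤ q(m+1) + q(m)` in `overpNo_one_succ_le`.
theorem card_distincts_succ_add_le (n : ℕ) :
    #(distincts (n + 1)) + (if n ≤ 1 then 1 else 0) ≤ 2 * #(distincts n) := by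
  have hsucc := card_distincts_succ_le (n := n)
  have hfilter := card_filter_le (distincts n) (fun q => 1 ∉ q.parts)
  match n with
  | 0 => simp [card_distincts_zero, card_distincts_one]
  | 1 => simp_all [card_distincts_one]
  | n + 2 => simp only [show ¬ n + 2 ≤ 1 by omega, if_false]; omega

end Nat.Partition

open Nat.Partition

theorem overp_zero : overp 0 = 1 := by
  simp [overp, card_distincts_zero]

theorem overp_one : overp 1 = 2 := by
  simp [overp, Finset.Nat.sum_antidiagonal_succ, card_distincts_zero, card_distincts_one]

theorem overpNo_one_zero : overpNo 1 0 = 1 := by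
  simp [overpNo, card_distincts_zero]

theorem overpNo_one_one : overpNo 1 1 = 1 := by
  simp [overpNo, Finset.Nat.sum_antidiagonal_succ, card_distincts_zero, card_distincts_one]

theorem overp_pos (n : ℕ) : 0 < overp n := by
  have hmem : (n, 0) ∈ antidiagonal n := mem_antidiagonal.2 (add_zero n)
  have h := single_le_sum
    (fun ij _ => Nat.zero_le (#(distincts ij.1) * Fintype.card (Nat.Partition ij.2))) hmem
  exact (Nat.mul_pos (card_distincts_pos n) Fintype.card_pos).trans_le h

theorem overpNo_one_pos (n : ℕ) : 0 < overpNo 1 n := by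
  have hmem : (n, 0) ∈ antidiagonal n := mem_antidiagonal.2 (add_zero n)
  have h := single_le_sum
    (fun ij _ => Nat.zero_le (#(distincts ij.1) * #{p : Nat.Partition ij.2 | 1 ∉ p.parts})) hmem
  exact (Nat.mul_pos (card_distincts_pos n) (by simp)).trans_le h

theorem overp_succ (n : ℕ) : overp (n + 1) = overpNo 1 (n + 1) + overp n := by
  simp only [overp, overpNo, Finset.Nat.sum_antidiagonal_succ', card_succ, mul_add,
    sum_add_distrib, Fintype.card_unique, card_filter_one_notMem_zero]
  ring

theorem overpNo_one_succ_le (n : ℕ) : overpNo 1 (n + 1) ≤ 2 * overpNo 1 n := by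
  rcases n with _ | m
  · simp [overpNo_one_zero, overpNo_one_one]
  set q : ℕ → ℕ := fun j => #{p : Nat.Partition j | 1 ∉ p.parts}
  set d : ℕ → ℕ := fun i => #(distincts i)
  have hq : q (m + 2) ≤ ∑ ij ∈ antidiagonal (m + 1), (if ij.1 ≤ 1 then 1 else 0) * q ij.2 := by
    refine card_filter_one_notMem_add_two_le.trans ?_
    simpa using add_le_sum (f := fun ij : ℕ × ℕ => (if ij.1 ≤ 1 then 1 else 0) * q ij.2)
      (fun _ _ => Nat.zero_le _) (i := (0, m + 1)) (j := (1, m)) (by simp) (by simp [add_comm])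
      (by simp)
  calc overpNo 1 (m + 2) = q (m + 2) + ∑ ij ∈ antidiagonal (m + 1), d (ij.1 + 1) * q ij.2 := by
        rw [overpNo, Finset.Nat.sum_antidiagonal_succ, card_distincts_zero, one_mul]
    _ ≤ ∑ ij ∈ antidiagonal (m + 1), ((if ij.1 ≤ 1 then 1 else 0) + d (ij.1 + 1)) * q ij.2 := by
        simp only [add_mul, sum_add_distrib]
        gcongr
    _ ≤ ∑ ij ∈ antidiagonal (m + 1), 2 * d ij.1 * q ij.2 := by
        gcongr with ij
        rw [add_comm]
        exact card_distincts_succ_add_le ij.1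
    _ = 2 * overpNo 1 (m + 1) := by
        simp only [overpNo, mul_sum, mul_assoc, d, q]

theorem overpNo_one_succ_le_overp (n : ℕ) : overpNo 1 (n + 1) ≤ overp n := by
  induction n with
  | zero => rw [overpNo_one_one, overp_zero]
  | succ m ih =>
    have := overpNo_one_succ_le (m + 1)
    rw [overp_succ]
    omega

theorem overp_succ_le (n : ℕ) : overp (n + 1) ≤ 2 * overp n := by
  have := overpNo_one_succ_le_overp n
  rw [overp_succ]
  omega

/-- The `n`-th coefficient of `∏ i, ∑ t, c i t • X ^ t`. -/
def tupleConv {k : ℕ} (c : Fin k → ℕ → ℕ) (n : ℕ) : ℕ :=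
  ∑ f ∈ Finset.Nat.antidiagonalTuple k n, ∏ i, c i (f i)

theorem sub_single_one_add_single_one {ι : Type*} [DecidableEq ι] {f : ι → ℕ} {j : ι}
    (h : f j ≠ 0) :
    f - Pi.single j 1 + Pi.single j 1 = f := by
  ext i
  by_cases hij : i = j
  · subst hij
    simp only [Pi.add_apply, Pi.sub_apply, Pi.single_eq_same]
    omega
  · simp [hij]

theorem sum_add_single_one {ι : Type*} [Fintype ι] [DecidableEq ι] (g : ι → ℕ) (j : ι) :
    ∑ i, (g + Pi.single j 1 : ι → ℕ) i = ∑ i, g i + 1 := by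
  simp [sum_add_distrib]

theorem sum_card_ne_zero_smul_antidiagonalTuple_succ {M : Type*} [AddCommMonoid M] (k n : ℕ)
    (F : (Fin k → ℕ) → M) :
    ∑ f ∈ Finset.Nat.antidiagonalTuple k (n + 1), #{j | f j ≠ 0} • F f =
      ∑ j, ∑ g ∈ Finset.Nat.antidiagonalTuple k n, F (g + Pi.single j 1) := by
  simp only [← sum_const, sum_filter]
  rw [sum_comm]
  refine sum_congr rfl fun j _ => ?_
  rw [← sum_filter]
  refine sum_nbij' (fun f => f - Pi.single j 1) (fun g => g + Pi.single j 1) ?_ ?_ ?_ ?_ ?_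
  · intro f hf
    rw [mem_filter, Finset.Nat.mem_antidiagonalTuple] at hf
    rw [Finset.Nat.mem_antidiagonalTuple]
    have := sum_add_single_one (f - Pi.single j 1) j
    rw [sub_single_one_add_single_one hf.2] at this
    omega
  · intro g hg
    rw [Finset.Nat.mem_antidiagonalTuple] at hg
    rw [mem_filter, Finset.Nat.mem_antidiagonalTuple, sum_add_single_one, hg]
    simp
  · intro f hf
    exact sub_single_one_add_single_one (mem_filter.1 hf).2
  · intro g _
    exact add_tsub_cancel_right g _
  · intro f hf
    rw [sub_single_one_add_single_one (mem_filter.1 hf).2]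

theorem prod_add_single_one_le {ι : Type*} [Fintype ι] [DecidableEq ι] {r : ℕ} {c : ι → ℕ → ℕ}
    (hc : ∀ i t, c i (t + 1) ≤ r * c i t) (g : ι → ℕ) (j : ι) :
    ∏ i, c i ((g + Pi.single j 1 : ι → ℕ) i) ≤ r * ∏ i, c i (g i) := by
  rw [Fintype.prod_eq_mul_prod_compl j, Fintype.prod_eq_mul_prod_compl j (fun i => c i (g i)),
    ← mul_assoc]
  have hrest : ∏ i ∈ {j}ᶜ, c i ((g + Pi.single j 1 : ι → ℕ) i) = ∏ i ∈ {j}ᶜ, c i (g i) :=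
    prod_congr rfl fun i hi => by
      have hij : i ≠ j := by simpa using hi
      simp [hij]
  rw [hrest]
  gcongr
  simpa using hc j (g j)

theorem tupleConv_succ_lt {k n r : ℕ} {c : Fin k → ℕ → ℕ} (hk : 2 ≤ k) (hn : 0 < n)
    (hc : ∀ i t, c i (t + 1) ≤ r * c i t) (hpos : ∀ i t, 0 < c i t) :
    tupleConv c (n + 1) < r * k * tupleConv c n := by
  let i₀ : Fin k := ⟨0, by omega⟩
  let i₁ : Fin k := ⟨1, by omega⟩
  have hsupp : ∀ f ∈ Finset.Nat.antidiagonalTuple k (n + 1),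
      ∏ i, c i (f i) ≤ #{j | f j ≠ 0} • ∏ i, c i (f i) := fun f hf => by
    obtain ⟨j, -, hj⟩ := exists_ne_zero_of_sum_ne_zero
      ((Finset.Nat.mem_antidiagonalTuple.1 hf).trans_ne n.succ_ne_zero)
    exact le_smul_of_one_le_left (Nat.zero_le _) (Finset.card_pos.2 ⟨j, by simpa using hj⟩)
  have h01 : i₀ ≠ i₁ := by simp [i₀, i₁, Fin.ext_iff]
  let f₀ : Fin k → ℕ := Pi.single i₀ n + Pi.single i₁ 1
  have hf₀ : f₀ ∈ Finset.Nat.antidiagonalTuple k (n + 1) := by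
    simp [f₀, Finset.Nat.mem_antidiagonalTuple, sum_add_distrib]
  have hsupp₀ : ∏ i, c i (f₀ i) < #{j | f₀ j ≠ 0} • ∏ i, c i (f₀ i) := by
    refine lt_smul_of_one_lt_left (prod_pos fun i _ => hpos i _) (one_lt_card.2 ?_)
    refine ⟨i₀, ?_, i₁, ?_, h01⟩
    · simpa [f₀, h01] using hn.ne'
    · simp [f₀, h01.symm]
  calc tupleConv c (n + 1)
      < ∑ f ∈ Finset.Nat.antidiagonalTuple k (n + 1), #{j | f j ≠ 0} • ∏ i, c i (f i) :=
        sum_lt_sum hsupp ⟨_, hf₀, hsupp₀⟩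
    _ = ∑ j, ∑ g ∈ Finset.Nat.antidiagonalTuple k n,
          ∏ i, c i ((g + Pi.single j 1 : Fin k → ℕ) i) :=
        sum_card_ne_zero_smul_antidiagonalTuple_succ k n _
    _ ≤ ∑ _j : Fin k, ∑ g ∈ Finset.Nat.antidiagonalTuple k n, r * ∏ i, c i (g i) := by
        gcongr with j _ g
        exact prod_add_single_one_le hc g j
    _ = r * k * tupleConv c n := by
        rw [sum_const, card_univ, Fintype.card_fin, smul_eq_mul, ← mul_sum, tupleConv]
        ring

theorem tupleConv_one {k : ℕ} (c : Fin k → ℕ → ℕ) :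
    tupleConv c 1 = ∑ j, ∏ i, c i ((Pi.single j 1 : Fin k → ℕ) i) := by
  have hsupp : ∀ f ∈ Finset.Nat.antidiagonalTuple k 1, #{j | f j ≠ 0} = 1 := fun f hf => by
    have hsum := Finset.Nat.mem_antidiagonalTuple.1 hf
    obtain ⟨j, -, hj⟩ := exists_ne_zero_of_sum_ne_zero (hsum.trans_ne one_ne_zero)
    refine le_antisymm (card_le_one.2 fun a ha b hb => ?_) (card_pos.2 ⟨j, by simpa using hj⟩)
    by_contra hab
    have := add_le_sum (fun i _ => Nat.zero_le (f i)) (mem_univ a) (mem_univ b) hab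
    simp only [mem_filter, mem_univ, true_and] at ha hb
    omega
  calc tupleConv c 1
      = ∑ f ∈ Finset.Nat.antidiagonalTuple k 1, #{j | f j ≠ 0} • ∏ i, c i (f i) :=
        sum_congr rfl fun f hf => by rw [hsupp f hf, one_smul]
    _ = _ := by
        rw [sum_card_ne_zero_smul_antidiagonalTuple_succ, Finset.Nat.antidiagonalTuple_zero_right]
        simp

theorem overpK_one (k : ℕ) : overpK k 1 = 2 * k := by
  change tupleConv (fun _ => overp) 1 = _
  rw [tupleConv_one]
  calc ∑ j : Fin k, ∏ i, overp ((Pi.single j 1 : Fin k → ℕ) i) = ∑ _j : Fin k, 2 :=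
        sum_congr rfl fun j _ => by
          rw [Fintype.prod_eq_single j fun i hi => by simp [hi, overp_zero]]
          simp [overp_one]
    _ = 2 * k := by simp [mul_comm]

theorem overpKNo1c1_mul_gt (a k : ℕ) (ha : 1 ≤ a) (hk : 2 ≤ k) :
    overpKNo1c1 k (a + 1) < overpKNo1c1 k a * overpK k 1 := by
  let c : Fin k → ℕ → ℕ := fun i t => if (i : ℕ) = 0 then overpNo 1 t else overp t
  have hc : ∀ i t, c i (t + 1) ≤ 2 * c i t := fun i t => by
    by_cases hi : (i : ℕ) = 0
    · simpa [c, hi] using overpNo_one_succ_le t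
    · simpa [c, hi] using overp_succ_le t
  have hpos : ∀ i t, 0 < c i t := fun i t => by
    by_cases hi : (i : ℕ) = 0
    · simpa [c, hi] using overpNo_one_pos t
    · simpa [c, hi] using overp_pos t
  calc overpKNo1c1 k (a + 1) = tupleConv c (a + 1) := rfl
    _ < 2 * k * tupleConv c a := tupleConv_succ_lt hk ha hc hpos
    _ = overpKNo1c1 k a * overpK k 1 := by rw [overpK_one, mul_comm]; rfl
end
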